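/- (Weakest-precondition characterization of QBUA◇) For every command C and resource functions P, Q: the QBUA◇ validity ⊨B◇ [P] C [Q] holds if and only if P ⪯ pre≤0(C, Q), where pre≤0(C, Q)(σ) = sup { p ∈ ℤ : ∃τ, q, q ≤ Q(τ) and C, σ, p ⇓≤0 τ, q } (supremum taken in ℤ ∪ {−∞, +∞}, with sup ∅ = −∞). -/

import Mathlib

/-! Basic language: variables, states, semantic expressions, resource values. -/

abbrev Var := String
abbrev State := Var → ℤ
abbrev AExp := State → ℤ
abbrev BExp := State → Bool

/-- Resource values: ℤ ∪ {−∞, +∞}. -/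
abbrev RVal := WithTop (WithBot ℤ)
/-- Resource functions. -/
abbrev RF := State → RVal

/-- Embedding of an integer into `RVal`. -/
def iv (n : ℤ) : RVal := ((n : WithBot ℤ) : RVal)

/-- State update. -/
def upd (σ : State) (x : Var) (v : ℤ) : State := fun y => if y = x then v else σ y

/-- Commands of the IMP-like language. -/
inductive Cmd where
  | skip
  | assign (x : Var) (e : AExp)
  | assume' (b : BExp)
  | tick (e : AExp)
  | seq (c₁ c₂ : Cmd)
  | choice (c₁ c₂ : Cmd)
  | star (c : Cmd)
  | local' (x : Var) (c : Cmd)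

/-- Resource-aware big-step semantics: `BigStep C σ p l τ q` is C, σ, p ⇓_l τ, q. -/
inductive BigStep : Cmd → State → ℤ → ℤ → State → ℤ → Prop where
  | skip {σ p} : BigStep .skip σ p p σ p
  | assign {x e σ p} : BigStep (.assign x e) σ p p (upd σ x (e σ)) p
  | assume' {b : BExp} {σ p} : b σ = true → BigStep (.assume' b) σ p p σ p
  | tick {e σ p} : BigStep (.tick e) σ p (min p (p - e σ)) σ (p - e σ)
  | seq {c₁ c₂ σ p l₁ ρ r l₂ τ q} : BigStep c₁ σ p l₁ ρ r → BigStep c₂ ρ r l₂ τ q →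
      BigStep (.seq c₁ c₂) σ p (min l₁ l₂) τ q
  | choiceL {c₁ c₂ σ p l τ q} : BigStep c₁ σ p l τ q → BigStep (.choice c₁ c₂) σ p l τ q
  | choiceR {c₁ c₂ σ p l τ q} : BigStep c₂ σ p l τ q → BigStep (.choice c₁ c₂) σ p l τ q
  | starZero {c σ p} : BigStep (.star c) σ p p σ p
  | starStep {c σ p l τ q} : BigStep (.seq c (.star c)) σ p l τ q → BigStep (.star c) σ p l τ q
  | local' {x c σ p l τ q} (v : ℤ) : BigStep c σ p l τ q →
      BigStep (.local' x c) (upd σ x v) p l (upd τ x v) q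

/-- C, σ, p ⇓ τ, q. -/
def BigStepP (c : Cmd) (σ : State) (p : ℤ) (τ : State) (q : ℤ) : Prop :=
  ∃ l, BigStep c σ p l τ q

/-- C, σ, p ⇓≤0 τ, q. -/
def BigStepL (c : Cmd) (σ : State) (p : ℤ) (τ : State) (q : ℤ) : Prop :=
  ∃ l ≤ 0, BigStep c σ p l τ q

/-- `Indep f S`: the state function `f` does not depend on the variables in `S`
(i.e. fv(f) ∩ S = ∅). -/
def Indep {α : Type _} (f : State → α) (S : Set Var) : Prop :=
  ∀ σ σ' : State, (∀ y ∉ S, σ y = σ' y) → f σ = f σ'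

/-- `Fresh y f`: the variable `y` is not free in the state function `f`. -/
def Fresh {α : Type _} (y : Var) (f : State → α) : Prop :=
  ∀ σ v, f (upd σ y v) = f σ

/-- The set of variables possibly modified by a command. -/
def modVars : Cmd → Set Var
  | .skip => ∅
  | .assign x _ => {x}
  | .assume' _ => ∅
  | .tick _ => ∅
  | .seq c₁ c₂ => modVars c₁ ∪ modVars c₂
  | .choice c₁ c₂ => modVars c₁ ∪ modVars c₂
  | .star c => modVars c
  | .local' x c => modVars c \ {x}

/-- Substitution e[y/x] on semantic expressions. -/
def esubst {α : Type _} (e : State → α) (x y : Var) : State → α :=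
  fun σ => e (upd σ x (σ y))

/-- `y` is not free in the command `C`. -/
def freshC (y : Var) : Cmd → Prop
  | .skip => True
  | .assign z e => y ≠ z ∧ Fresh y e
  | .assume' b => Fresh y b
  | .tick e => Fresh y e
  | .seq c₁ c₂ => freshC y c₁ ∧ freshC y c₂
  | .choice c₁ c₂ => freshC y c₁ ∧ freshC y c₂
  | .star c => freshC y c
  | .local' z c => y = z ∨ freshC y c

/-- Substitution C[y/x]: rename every free occurrence of `x` in `C` to `y`. -/
def csubst : Cmd → Var → Var → Cmd
  | .skip, _, _ => .skip
  | .assign z e, x, y => .assign (if z = x then y else z) (esubst e x y)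
  | .assume' b, x, y => .assume' (esubst b x y)
  | .tick e, x, y => .tick (esubst e x y)
  | .seq c₁ c₂, x, y => .seq (csubst c₁ x y) (csubst c₂ x y)
  | .choice c₁ c₂, x, y => .choice (csubst c₁ x y) (csubst c₂ x y)
  | .star c, x, y => .star (csubst c x y)
  | .local' z c, x, y => if z = x then .local' z c else .local' z (csubst c x y)

/-- Bounded iteration: C⁰ = skip, C^(n+1) = C; Cⁿ. -/
def iter (c : Cmd) : ℕ → Cmd
  | 0 => .skip
  | n + 1 => .seq c (iter c n)

/-- Pointwise order on resource functions. -/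
def rle (P Q : RF) : Prop := ∀ σ, P σ ≤ Q σ

/-- [B]: +∞ if B holds, −∞ otherwise. -/
def bnd (b : BExp) : RF := fun σ => if b σ then ⊤ else ⊥

/-- `P` is finitely supported: it depends on only finitely many variables. -/
def FinSupp (P : RF) : Prop := ∃ S : Finset Var, Indep P ((↑S : Set Var)ᶜ)

/-- Semantic equivalence of commands. -/
def CEquiv (c c' : Cmd) : Prop := ∀ σ p l τ q, BigStep c σ p l τ q ↔ BigStep c' σ p l τ q

/-- QFUA validity ⊨F [P] C [Q]. -/
def FValid (P : RF) (c : Cmd) (Q : RF) : Prop :=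
  ∀ τ (q : ℤ), Q τ ≤ iv q → ∃ σ, ∃ p : ℤ, P σ ≤ iv p ∧ BigStepP c σ p τ q

/-- QBUA validity ⊨B [P] C [Q]. -/
def BValid (P : RF) (c : Cmd) (Q : RF) : Prop :=
  ∀ σ (p : ℤ), iv p ≤ P σ → ∃ τ, ∃ q : ℤ, iv q ≤ Q τ ∧ BigStepP c σ p τ q

/-- QBUA◇ validity ⊨B◇ [P] C [Q]. -/
def DValid (P : RF) (c : Cmd) (Q : RF) : Prop :=
  ∀ σ (p : ℤ), iv p ≤ P σ → ∃ τ, ∃ q : ℤ, iv q ≤ Q τ ∧ BigStepL c σ p τ q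

/-- Quantitative weakest precondition with high-water mark (sup ∅ = −∞). -/
noncomputable def preL (c : Cmd) (Q : RF) : RF :=
  fun σ => sSup (iv '' {p : ℤ | ∃ τ, ∃ q : ℤ, iv q ≤ Q τ ∧ BigStepL c σ p τ q})

lemma iv_le_iv {m n : ℤ} : iv m ≤ iv n ↔ m ≤ n := by
  simp [iv]

lemma le_iff_forall_iv_le {x y : RVal} : x ≤ y ↔ ∀ p : ℤ, iv p ≤ x → iv p ≤ y := by
  refine ⟨fun hxy p hp => hp.trans hxy, fun h => ?_⟩
  induction x using WithTop.recTopCoe with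
  | top =>
    induction y using WithTop.recTopCoe with
    | top => exact le_rfl
    | coe y =>
      induction y using WithBot.recBotCoe with
      | bot => exact absurd (WithTop.coe_le_coe.mp (h 0 le_top)) (WithBot.bot_lt_coe 0).not_ge
      | coe n => exact absurd (iv_le_iv.mp (h (n + 1) le_top : iv (n + 1) ≤ iv n)) (by omega)
  | coe x =>
    induction x using WithBot.recBotCoe with
    | bot => exact bot_le
    | coe n => exact h n le_rfl

lemma iv_le_sSup_image_iff {S : Set ℤ} (hS : IsLowerSet S) {p : ℤ} :
    iv p ≤ sSup (iv '' S) ↔ p ∈ S := by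
  refine ⟨fun hp => ?_, fun hp => le_sSup (Set.mem_image_of_mem iv hp)⟩
  by_contra hpS
  have hbound : sSup (iv '' S) ≤ iv (p - 1) := by
    refine sSup_le ?_
    rintro _ ⟨s, hs, rfl⟩
    have : s < p := lt_of_not_ge fun hps => hpS (hS hps hs)
    exact iv_le_iv.mpr (by omega)
  have := iv_le_iv.mp (hp.trans hbound)
  omega

lemma BigStep.shift {c σ p l τ q} (h : BigStep c σ p l τ q) (d : ℤ) :
    BigStep c σ (p + d) (l + d) τ (q + d) := by
  induction h with
  | skip => exact .skip
  | assign => exact .assign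
  | assume' hb => exact .assume' hb
  | tick => convert BigStep.tick using 2 <;> omega
  | seq _ _ ih₁ ih₂ => convert BigStep.seq ih₁ ih₂ using 1; omega
  | choiceL _ ih => exact .choiceL ih
  | choiceR _ ih => exact .choiceR ih
  | starZero => exact .starZero
  | starStep _ ih => exact .starStep ih
  | local' v _ ih => exact .local' v ih

def preLSet (c : Cmd) (Q : RF) (σ : State) : Set ℤ :=
  {p | ∃ τ, ∃ q : ℤ, iv q ≤ Q τ ∧ BigStepL c σ p τ q}

/-- Starting with less resource is still safe: the whole run, its high-water mark and its final
resource all shift down by the same amount. -/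
lemma isLowerSet_preLSet (c : Cmd) (Q : RF) (σ : State) : IsLowerSet (preLSet c Q σ) := by
  rintro p' p hpp' ⟨τ, q, hq, l, hl, hstep⟩
  refine ⟨τ, q + (p - p'), (iv_le_iv.mpr (by omega)).trans hq, l + (p - p'), by omega, ?_⟩
  simpa using hstep.shift (p - p')

theorem dvalid_iff_le_preL (C : Cmd) (P Q : RF) :
    DValid P C Q ↔ rle P (preL C Q) := by
  refine forall_congr' fun σ => ?_
  rw [le_iff_forall_iv_le]
  refine forall_congr' fun p => imp_congr_right fun _ => ?_
  exact (iv_le_sSup_image_iff (isLowerSet_preLSet C Q σ)).symm
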